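/- Let σ ∈ {+1,−1}, let N₁,N₂,N₃,N₄ ∈ ℝ⁴ be linearly independent, and let V₁,V₂,V₃,V₄ ∈ ℝ⁴ satisfy ⟪V_i,V_i⟫ = σ and ⟪V_i,N_j⟫ = 0 for all j ≠ i. For each i define χ̃_i := (−1)^{i−1} σ · det(V_i | N_j | N_k | N_l), where j < k < l are the three indices other than i. Then for every i one has ⟪V_i,N_i⟫ ≠ 0, χ̃_i ≠ 0, and det(N₁ | N₂ | N₃ | N₄) = ⟪V_i,N_i⟫ · χ̃_i. Consequently, the four numbers ⟪V₁,N₁⟫,…,⟪V₄,N₄⟫ all have the same sign if and only if the four numbers χ̃₁,…,χ̃₄ all have the same sign. -/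

import Mathlib

open Matrix

noncomputable section

/-- Ambient metric: `η_{+1} = diag(-1,1,1,1)`, `η_{-1} = diag(-1,-1,1,1)`. -/
def eta (σ : ℝ) : Matrix (Fin 4) (Fin 4) ℝ := Matrix.diagonal ![-1, σ, 1, 1]

/-- Ambient bilinear form `⟪X,Y⟫ = Xᵀ η_σ Y`. -/
def ip (σ : ℝ) (X Y : Fin 4 → ℝ) : ℝ := X ⬝ᵥ (eta σ *ᵥ Y)

/-- The `4×4` matrix with the indicated columns. -/
def colMat (a b c d : Fin 4 → ℝ) : Matrix (Fin 4) (Fin 4) ℝ := (Matrix.of ![a, b, c, d])ᵀ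

/-- `χ̃_i := (-1)^{i-1} σ det(V_i | N_j | N_k | N_l)` with `j < k < l` the indices other than
`i` (in 0-based indexing the sign is `(-1)^i` and `j,k,l` are `i.succAbove 0,1,2`). -/
def chiTilde (σ : ℝ) (N V : Fin 4 → (Fin 4 → ℝ)) (i : Fin 4) : ℝ :=
  (-1 : ℝ) ^ (i : ℕ) * σ *
    (colMat (V i) (N (i.succAbove 0)) (N (i.succAbove 1)) (N (i.succAbove 2))).det

/-!
Write `V i = ∑ m, a m • N m` in the basis `N`. Orthogonality gives
`σ = ⟪V i, V i⟫ = a i * ⟪V i, N i⟫`, while multilinearity of the determinant, after moving `V i`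
to row `i` (a cyclic permutation of sign `(-1)^i`), gives `χ̃ i = σ * a i * det N`. Hence
`⟪V i, N i⟫ * χ̃ i = σ² det N = det N ≠ 0`, so every product `⟪V i, N i⟫ * χ̃ i` has the sign of
`det N`, which gives the sign statement.
-/

namespace Matrix

variable {R : Type*} [CommRing R] {n : ℕ}

theorem det_of_cons_comp_succAbove (M : Matrix (Fin (n + 1)) (Fin (n + 1)) R)
    (i : Fin (n + 1)) (x : Fin (n + 1) → R) :
    (of (Fin.cons x fun j => M (i.succAbove j))).det = (-1) ^ (i : ℕ) * (M.updateRow i x).det := by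
  have hrows : (Fin.cons x fun j => M (i.succAbove j) : Fin (n + 1) → Fin (n + 1) → R) =
      M.updateRow i x ∘ i.cycleRange.symm := by
    refine Eq.trans ?_ (Fin.cons_removeNth_eq_comp_cycleRange_symm (M.updateRow i x) i)
    rw [updateRow_self]
    congr 1
    ext j : 1
    exact (updateRow_ne (Fin.succAbove_ne i j)).symm
  rw [hrows]
  refine (det_permute i.cycleRange.symm (M.updateRow i x)).trans ?_
  simp [Fin.sign_cycleRange]

end Matrix

open Matrix

theorem or_forall_pos_forall_neg_iff_of_mul_eq {α ι : Type*} [Ring α] [LinearOrder α]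
    [IsStrictOrderedRing α] {x y : ι → α} {D : α} (hD : D ≠ 0) (hxy : ∀ i, x i * y i = D) :
    ((∀ i, 0 < x i) ∨ (∀ i, x i < 0)) ↔ ((∀ i, 0 < y i) ∨ (∀ i, y i < 0)) := by
  rcases hD.lt_or_gt with hD | hD
  · have hneg : ∀ i, x i * y i < 0 := fun i => hxy i ▸ hD
    rw [forall_congr' fun i => pos_iff_neg_of_mul_neg (hneg i),
      forall_congr' fun i => neg_iff_pos_of_mul_neg (hneg i), or_comm]
  · have hpos : ∀ i, 0 < x i * y i := fun i => hxy i ▸ hD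
    rw [forall_congr' fun i => pos_iff_pos_of_mul_pos (hpos i),
      forall_congr' fun i => neg_iff_neg_of_mul_pos (hpos i)]

theorem det_colMat_self (N : Fin 4 → Fin 4 → ℝ) :
    (colMat (N 0) (N 1) (N 2) (N 3)).det = (of N).det := by
  rw [colMat, det_transpose]
  congr
  ext r : 1
  fin_cases r <;> rfl

theorem det_colMat_succAbove (x : Fin 4 → ℝ) (N : Fin 4 → Fin 4 → ℝ) (i : Fin 4) :
    (colMat x (N (i.succAbove 0)) (N (i.succAbove 1)) (N (i.succAbove 2))).det =
      (-1) ^ (i : ℕ) * ((of N).updateRow i x).det := by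
  rw [colMat, det_transpose, ← det_of_cons_comp_succAbove]
  congr
  ext r : 1
  fin_cases r <;> rfl

theorem ip_sum_smul_right {ι : Type*} [Fintype ι] (σ : ℝ) (X : Fin 4 → ℝ) (a : ι → ℝ)
    (Y : ι → Fin 4 → ℝ) : ip σ X (∑ m, a m • Y m) = ∑ m, a m * ip σ X (Y m) := by
  simp [ip, mulVec_sum, dotProduct_sum, mulVec_smul, dotProduct_smul]

theorem coeff_mul_ip_eq_of_ip_eq_zero {ι : Type*} [Fintype ι] {σ : ℝ} {V : Fin 4 → ℝ}
    {N : ι → Fin 4 → ℝ} {a : ι → ℝ} (hV : ∑ m, a m • N m = V) {i : ι}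
    (hVN : ∀ j, j ≠ i → ip σ V (N j) = 0) :
    a i * ip σ V (N i) = ip σ V V := by
  rw [← hV, ip_sum_smul_right, hV, Finset.sum_eq_single_of_mem i (Finset.mem_univ i)]
  intro j _ hj
  rw [hVN j hj, mul_zero]

theorem det_colMat_eq_ip_mul_chiTilde {σ : ℝ} (hσ : σ * σ = 1) {N V : Fin 4 → Fin 4 → ℝ}
    (hN : LinearIndependent ℝ N) (i : Fin 4) (hVV : ip σ (V i) (V i) = σ)
    (hVN : ∀ j, j ≠ i → ip σ (V i) (N j) = 0) :
    (colMat (N 0) (N 1) (N 2) (N 3)).det = ip σ (V i) (N i) * chiTilde σ N V i := by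
  obtain ⟨a, ha⟩ : ∃ a : Fin 4 → ℝ, ∑ m, a m • N m = V i := by
    rw [← Submodule.mem_span_range_iff_exists_fun, hN.span_eq_top_of_card_eq_finrank' (by simp)]
    exact Submodule.mem_top
  have hcoeff : a i * ip σ (V i) (N i) = σ := (coeff_mul_ip_eq_of_ip_eq_zero ha hVN).trans hVV
  have hrow : ((of N).updateRow i (V i)).det = a i * (of N).det :=
    ha ▸ det_updateRow_sum (of N) i a
  have hsign : ((-1 : ℝ) ^ (i : ℕ)) * (-1) ^ (i : ℕ) = 1 := by rw [← mul_pow]; norm_num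
  have hchi : chiTilde σ N V i = σ * a i * (of N).det := by
    rw [chiTilde, det_colMat_succAbove, hrow]
    linear_combination (σ * a i * (of N).det) * hsign
  rw [det_colMat_self, hchi]
  linear_combination (-(σ * (of N).det)) * hcoeff - (of N).det * hσ

/-- If `N₁,…,N₄` are linearly independent and each `V_i` satisfies `⟪V_i,V_i⟫ = σ` and
`⟪V_i,N_j⟫ = 0` for `j ≠ i`, then each support number `⟪V_i,N_i⟫` and each `χ̃_i` is nonzero,
`det(N₁|N₂|N₃|N₄) = ⟪V_i,N_i⟫ χ̃_i` for every `i`, and the support numbers all have the same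
sign iff the `χ̃_i` all have the same sign. -/
theorem det_support_chi (σ : ℝ) (hσ : σ = 1 ∨ σ = -1) (N V : Fin 4 → (Fin 4 → ℝ))
    (hN : LinearIndependent ℝ N)
    (hVV : ∀ i, ip σ (V i) (V i) = σ)
    (hVN : ∀ i j, j ≠ i → ip σ (V i) (N j) = 0) :
    (∀ i, ip σ (V i) (N i) ≠ 0 ∧ chiTilde σ N V i ≠ 0 ∧
      (colMat (N 0) (N 1) (N 2) (N 3)).det = ip σ (V i) (N i) * chiTilde σ N V i) ∧
    (((∀ i, 0 < ip σ (V i) (N i)) ∨ (∀ i, ip σ (V i) (N i) < 0)) ↔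
      ((∀ i, 0 < chiTilde σ N V i) ∨ (∀ i, chiTilde σ N V i < 0))) := by
  have hσσ : σ * σ = 1 := by rcases hσ with rfl | rfl <;> norm_num
  have hD : (colMat (N 0) (N 1) (N 2) (N 3)).det ≠ 0 := by
    rw [det_colMat_self]
    exact ((isUnit_iff_isUnit_det _).mp (linearIndependent_rows_iff_isUnit.mp hN)).ne_zero
  have hprod := fun i => det_colMat_eq_ip_mul_chiTilde hσσ hN i (hVV i) (hVN i)
  refine ⟨fun i => ⟨left_ne_zero_of_mul (hprod i ▸ hD), right_ne_zero_of_mul (hprod i ▸ hD),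
    hprod i⟩, or_forall_pos_forall_neg_iff_of_mul_eq hD fun i => (hprod i).symm⟩
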